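/- Let X be a path-connected topological space such that the second homotopy group π₂(X, x) is trivial for every x ∈ X and the abelianization of the fundamental group π₁(X, x₀) is finite for some (hence any) basepoint x₀. Let L ∈ ΛX be a free loop whose class [L] in π₁(X, L(1)) is the identity element, and let A be a torsion-free abelian group. Then every group homomorphism ψ : π₁(ΛX, L) → A is the trivial homomorphism. -/

import Mathlib

/-!
Since `[L] = 1`, a nullhomotopy of the based loop of `L` is a path in `ΛX` from `L` to the constant
loop `c_x` at `x = L(1)`, so `π₁(ΛX, L) ≅ π₁(ΛX, c_x)`. Evaluation at `1` induces a homomorphism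
`π₁(ΛX, c_x) → π₁(X, x)`, split by the inclusion of constant loops. It is injective when
`π₂(X, x) = 0`: if the evaluation loop of a loop `p` in `ΛX` is nullhomotopic via `K`, sliding the
basepoint of each free loop `p(a)` along `K(·, a)` deforms `p` into a loop of free loops all based
at `x`, i.e. a map of the square sending the boundary to `x`, which is nullhomotopic since
`π₂(X, x) = 0`. Hence `π₁(ΛX, L) ≅ π₁(X, x)` has finite abelianization, and a homomorphism from it
to a torsion-free abelian group factors through a finite group, so it is trivial.
-/

open scoped Topology
open CategoryTheory

noncomputable section

attribute [local instance] Path.Homotopic.setoid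

/-- The free loop space `ΛX = C(S¹, X)` with the compact-open topology. -/
abbrev FreeLoopSpace (X : Type*) [TopologicalSpace X] : Type _ := C(Circle, X)

/-- The evaluation map `ev : ΛX → X`, `L ↦ L(1)`. -/
def evaluationMap (X : Type*) [TopologicalSpace X] : C(FreeLoopSpace X, X) :=
  ⟨fun L => L 1, continuous_eval_const 1⟩

/-- The homomorphism induced on fundamental groups by a continuous map. -/
def inducedHom {X Y : Type u} [TopologicalSpace X] [TopologicalSpace Y]
    (f : C(X, Y)) (x : X) :
    FundamentalGroup X x →* FundamentalGroup Y (f x) :=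
  CategoryTheory.Functor.mapEnd
    (f := FundamentalGroupoid.fundamentalGroupoidFunctor.map (TopCat.ofHom f)) ⟨x⟩

/-- The based loop `t ↦ L (exp (2πit))` associated to a free loop `L`. -/
def basedLoop {X : Type*} [TopologicalSpace X] (L : C(Circle, X)) :
    Path (L 1) (L 1) where
  toFun t := L (Circle.exp (2 * Real.pi * t))
  continuous_toFun := L.continuous.comp <| Circle.exp.continuous.comp <| by fun_prop
  source' := by simp
  target' := by simp

/-- The class `[L] ∈ π₁(X, L(1))` of a free loop `L`. -/
def loopClass {X : Type u} [TopologicalSpace X] (L : C(Circle, X)) :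
    FundamentalGroup X (L 1) :=
  FundamentalGroup.fromPath (X := TopCat.of X) ⟦basedLoop L⟧

/-- Torsion-free monoid (Mathlib's former `Monoid.IsTorsionFree`, removed since). -/
def Monoid.IsTorsionFree (G : Type*) [Monoid G] : Prop :=
  ∀ g : G, g ≠ 1 → ¬IsOfFinOrder g

theorem MonoidHom.eq_one_of_finite_abelianization {G A : Type*} [Group G] [CommGroup A]
    [Finite (Abelianization G)] (hA : Monoid.IsTorsionFree A) (f : G →* A) : f = 1 := by
  ext g
  have hfin : IsOfFinOrder (Abelianization.lift f (Abelianization.of g)) :=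
    (Abelianization.lift f).isOfFinOrder (isOfFinOrder_of_finite _)
  rw [Abelianization.lift_apply_of] at hfin
  by_contra hne
  exact hA (f g) hne hfin

open unitInterval

namespace unitInterval

def expCircle : C(I, Circle) :=
  ⟨fun t => Circle.exp (2 * Real.pi * t), by fun_prop⟩

lemma expCircle_apply (t : I) : expCircle t = Circle.exp (2 * Real.pi * t) := rfl

@[simp] lemma expCircle_zero : expCircle 0 = 1 := by simp [expCircle_apply]

@[simp] lemma expCircle_one : expCircle 1 = 1 := by simp [expCircle_apply]

lemma surjective_expCircle : Function.Surjective expCircle := by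
  intro z
  set a := Complex.arg z / (2 * Real.pi)
  refine ⟨⟨Int.fract a, Int.fract_nonneg _, (Int.fract_lt_one _).le⟩, ?_⟩
  calc Circle.exp (2 * Real.pi * Int.fract a) = Circle.exp (2 * Real.pi * a) :=
        Circle.exp_eq_exp.mpr ⟨-⌊a⌋, by rw [Int.fract]; push_cast; ring⟩
    _ = z := by rw [mul_div_cancel₀ _ (by positivity), Circle.exp_arg]

lemma eq_or_mem_boundary_of_expCircle_eq {s t : I} (h : expCircle s = expCircle t) :
    s = t ∨ (s = 0 ∨ s = 1) ∧ (t = 0 ∨ t = 1) := by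
  obtain ⟨m, hm⟩ := Circle.exp_eq_exp.mp h
  have hst : (s : ℝ) = t + m := by nlinarith [Real.pi_pos]
  have hm : m = -1 ∨ m = 0 ∨ m = 1 := by
    have : (-1 : ℝ) < m + 1 ∧ (m : ℝ) - 1 < 1 := by
      constructor <;> linarith [s.2.1, s.2.2, t.2.1, t.2.2]
    have : -1 < m + 1 ∧ m - 1 < 1 := by exact_mod_cast this
    omega
  rcases hm with rfl | rfl | rfl
  · right; constructor <;> [left; right] <;> ext <;> push_cast at hst ⊢ <;> linarith [s.2.1, t.2.2]
  · left; ext; simpa using hst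
  · right; constructor <;> [right; left] <;> ext <;> push_cast at hst ⊢ <;> linarith [s.2.2, t.2.1]

lemma isQuotientMap_prodMap_expCircle (Y : Type*) [TopologicalSpace Y] :
    Topology.IsQuotientMap ((ContinuousMap.id Y).prodMap expCircle) :=
  (isProperMap_id.prodMap (expCircle.continuous.isProperMap)).isClosedMap.isQuotientMap
    (by fun_prop) (Function.surjective_id.prodMap surjective_expCircle)

end unitInterval

theorem Path.homotopic_of_square {Z : Type*} [TopologicalSpace Z] {z w : Z} {p q : Path z w}
    (H : C(I × I, Z)) (h₀ : ∀ a, H (0, a) = p a) (h₁ : ∀ a, H (1, a) = q a)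
    (hz : ∀ τ, H (τ, 0) = z) (hw : ∀ τ, H (τ, 1) = w) : p.Homotopic q := by
  refine ⟨⟨⟨H, h₀, h₁⟩, ?_⟩⟩
  rintro τ a (rfl | rfl)
  · simp [hz]
  · simp [hw]

namespace ContinuousMap

variable {X Y : Type*} [TopologicalSpace X] [TopologicalSpace Y]

lemma ext_expCircle {f g : C(Circle, X)} (h : ∀ t, f (expCircle t) = g (expCircle t)) :
    f = g :=
  ext fun z => by obtain ⟨t, rfl⟩ := surjective_expCircle z; exact h t

def loopFamily (M : C(Y × I, X)) (hM : ∀ y, M (y, 0) = M (y, 1)) : C(Y, C(Circle, X)) :=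
  curry <| (isQuotientMap_prodMap_expCircle Y).lift M fun ⟨y, s⟩ ⟨y', t⟩ h => by
    obtain ⟨rfl, ht : expCircle s = expCircle t⟩ := Prod.ext_iff.mp h
    rcases eq_or_mem_boundary_of_expCircle_eq ht with rfl | ⟨rfl | rfl, rfl | rfl⟩ <;>
      simp [hM]

@[simp] lemma loopFamily_apply_expCircle (M : C(Y × I, X)) (hM : ∀ y, M (y, 0) = M (y, 1))
    (y : Y) (t : I) : loopFamily M hM y (expCircle t) = M (y, t) :=
  congr($((isQuotientMap_prodMap_expCircle Y).lift_comp M _) (y, t))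

/-- At time `τ` the loop `F (a, ·)` is conjugated by the segment `K ([0, τ], a)` of the path
`K (·, a)`; at `τ = 0` the conjugating segments are constant and this is `F` itself. -/
def slideBasepoint (K F : C(I × I, X)) (hKF : ∀ a, K (0, a) = F (a, 0))
    (hF : ∀ a, F (a, 0) = F (a, 1)) : C((I × I) × I, X) where
  toFun p :=
    if 3 * (p.2 : ℝ) ≤ p.1.1 then K (Set.projIcc 0 1 zero_le_one (p.1.1 - 3 * p.2), p.1.2)
    else if 3 * (p.2 : ℝ) ≤ 3 - p.1.1 then
      F (p.1.2, Set.projIcc 0 1 zero_le_one ((3 * p.2 - p.1.1) / (3 - 2 * p.1.1)))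
    else K (Set.projIcc 0 1 zero_le_one (3 * p.2 - 3 + p.1.1), p.1.2)
  continuous_toFun := by
    have hden (p : (I × I) × I) : (3 : ℝ) - 2 * p.1.1 ≠ 0 := by linarith [p.1.1.2.2]
    refine Continuous.if_le (by fun_prop) (Continuous.if_le ?_ (by fun_prop) (by fun_prop)
      (by fun_prop) fun p hp => ?_) (by fun_prop) (by fun_prop) fun p hp => ?_
    · exact F.continuous.comp <| (by fun_prop : Continuous _).prodMk <|
        continuous_projIcc.comp <| Continuous.div (by fun_prop) (by fun_prop) hden
    · rw [(div_eq_one_iff_eq (hden p)).mpr (by linarith), show 3 * (p.2 : ℝ) - 3 + p.1.1 = 0 by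
        linarith]
      simp [hKF, hF]
    · have hle : 3 * (p.2 : ℝ) ≤ 3 - p.1.1 := by linarith [p.1.1.2.2]
      rw [if_pos hle, sub_eq_zero.mpr hp.symm, div_eq_zero_iff.mpr (.inl (by linarith))]
      simp [hKF]

variable {K F : C(I × I, X)} {hKF : ∀ a, K (0, a) = F (a, 0)} {hF : ∀ a, F (a, 0) = F (a, 1)}

lemma slideBasepoint_apply_zero (a b : I) : slideBasepoint K F hKF hF ((0, a), b) = F (a, b) := by
  have hb : (0 : ℝ) ≤ b := b.2.1
  simp only [slideBasepoint, coe_mk, Set.Icc.coe_zero]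
  split_ifs with h₁ h₂
  · obtain rfl : b = 0 := Subtype.ext (show (b : ℝ) = 0 by linarith)
    simp [hKF]
  · rw [show (3 * (b : ℝ) - 0) / (3 - 2 * 0) = b by ring, Set.projIcc_val]
  · exact absurd (by linarith [b.2.2]) h₂

lemma slideBasepoint_apply_left (τ a : I) : slideBasepoint K F hKF hF ((τ, a), 0) = K (τ, a) := by
  simp [slideBasepoint, τ.2.1]

lemma slideBasepoint_apply_right (τ a : I) : slideBasepoint K F hKF hF ((τ, a), 1) = K (τ, a) := by
  simp only [slideBasepoint, coe_mk, Set.Icc.coe_one]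
  rw [if_neg (by linarith [τ.2.2])]
  split_ifs with h
  · obtain rfl : τ = 0 := Subtype.ext (show (τ : ℝ) = 0 by linarith [τ.2.1])
    simp [← hF, hKF]
  · rw [show 3 * (1 : ℝ) - 3 + τ = τ by ring, Set.projIcc_val]

lemma slideBasepoint_apply_of_const {x : X} {a : I} (hK : ∀ τ, K (τ, a) = x)
    (hFa : ∀ b, F (a, b) = x) (τ b : I) : slideBasepoint K F hKF hF ((τ, a), b) = x := by
  simp only [slideBasepoint, coe_mk]
  split_ifs <;> simp [hK, hFa]

end ContinuousMap

namespace FreeLoopSpace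

open ContinuousMap

variable {X : Type u} [TopologicalSpace X]

theorem exists_homotopic_forall_apply_one_eq {x : X} (p : Path (const Circle x) (const Circle x))
    (hp : (p.map (continuous_eval_const (1 : Circle))).Homotopic (Path.refl x)) :
    ∃ q : Path (const Circle x) (const Circle x), p.Homotopic q ∧ ∀ a, q a 1 = x := by
  obtain ⟨K⟩ := hp
  let F : C(I × I, X) := ⟨fun ab => p ab.1 (expCircle ab.2), by fun_prop⟩
  have hKF (a : I) : K (0, a) = F (a, 0) := by
    rw [K.apply_zero]
    simp [F, Path.map, Path.map']
  have hF (a : I) : F (a, 0) = F (a, 1) := by simp [F]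
  let S := slideBasepoint K.toContinuousMap F hKF hF
  let H := loopFamily S fun y => by
    rw [slideBasepoint_apply_left, slideBasepoint_apply_right]
  have hH₀ (τ : I) : H (τ, 0) = const Circle x := ext_expCircle fun t => by
    simpa [H, S] using slideBasepoint_apply_of_const (K.source ·) (by simp [F]) τ t
  have hH₁ (τ : I) : H (τ, 1) = const Circle x := ext_expCircle fun t => by
    simpa [H, S] using slideBasepoint_apply_of_const (K.target ·) (by simp [F]) τ t
  refine ⟨⟨⟨fun a => H (1, a), by fun_prop⟩, hH₀ 1, hH₁ 1⟩,
    Path.homotopic_of_square H (fun a => ext_expCircle fun t => ?_) (fun _ => rfl) hH₀ hH₁,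
    fun a => ?_⟩
  · simp [H, S, slideBasepoint_apply_zero, F]
  · change H (1, a) 1 = x
    rw [← expCircle_zero, loopFamily_apply_expCircle, slideBasepoint_apply_left]
    exact K.apply_one a

theorem homotopic_refl_of_forall_apply_one_eq {x : X} [Subsingleton (π_ 2 X x)]
    (q : Path (const Circle x) (const Circle x)) (hq : ∀ a, q a 1 = x) :
    q.Homotopic (Path.refl _) := by
  let G : GenLoop (Fin 2) X x := ⟨⟨fun y => q (y 0) (expCircle (y 1)), by fun_prop⟩, by
    intro y hy
    change q (y 0) (expCircle (y 1)) = x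
    rcases Fin.exists_fin_two.mp hy with (h | h) | (h | h) <;> simp [h, hq]⟩
  obtain ⟨N⟩ : GenLoop.Homotopic G GenLoop.const :=
    Quotient.exact (Subsingleton.elim (α := π_ 2 X x) ⟦G⟧ ⟦GenLoop.const⟧)
  have hN (τ : I) {y : I^(Fin 2)} (hy : y ∈ Cube.boundary (Fin 2)) : N (τ, y) = x :=
    (N.eq_fst τ hy).trans (G.2 y hy)
  let M : C((I × I) × I, X) := ⟨fun p => N (p.1.1, ![p.1.2, p.2]), by fun_prop⟩
  let H := loopFamily M fun y => (hN _ ⟨1, .inl rfl⟩).trans (hN _ ⟨1, .inr rfl⟩).symm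
  refine Path.homotopic_of_square H (fun a => ?_) (fun a => ?_) (fun τ => ?_) (fun τ => ?_) <;>
    refine ext_expCircle fun t => ?_
  · simp [H, M, G]
  · simp [H, M]
  · simpa [H, M] using hN τ ⟨0, .inl rfl⟩
  · simpa [H, M] using hN τ ⟨0, .inr rfl⟩

theorem inducedHom_evaluationMap_comp_const' (x : X) :
    (inducedHom (evaluationMap X) (const Circle x)).comp (inducedHom const' x) =
      MonoidHom.id (FundamentalGroup X x) := by
  ext η
  obtain ⟨γ, rfl⟩ := Quotient.exists_rep η
  rfl

theorem injective_inducedHom_evaluationMap (x : X) [Subsingleton (π_ 2 X x)] :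
    Function.Injective (inducedHom (evaluationMap X) (const Circle x)) := by
  refine (injective_iff_map_eq_one _).mpr fun μ hμ => ?_
  obtain ⟨p, rfl⟩ := Quotient.exists_rep μ
  obtain ⟨q, hpq, hq⟩ :=
    exists_homotopic_forall_apply_one_eq p (Quotient.exact (s := Path.Homotopic.setoid _ _) hμ)
  exact Quotient.sound (hpq.trans (homotopic_refl_of_forall_apply_one_eq q hq))

def fundamentalGroupConstMulEquiv (x : X) [Subsingleton (π_ 2 X x)] :
    FundamentalGroup (FreeLoopSpace X) (const Circle x) ≃* FundamentalGroup X x :=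
  MulEquiv.ofBijective (inducedHom (evaluationMap X) (const Circle x))
    ⟨injective_inducedHom_evaluationMap x,
      fun η => ⟨inducedHom const' x η, congr($(inducedHom_evaluationMap_comp_const' x) η)⟩⟩

theorem joined_const_of_loopClass_eq_one {L : FreeLoopSpace X} (hL : loopClass L = 1) :
    Joined L (const Circle (L 1)) := by
  obtain ⟨H⟩ : (basedLoop L).Homotopic (Path.refl (L 1)) := Quotient.exact hL
  let P := loopFamily H.toContinuousMap fun _ => by simp
  refine ⟨⟨P, ext_expCircle fun t => ?_, ext_expCircle fun t => ?_⟩⟩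
  · exact (loopFamily_apply_expCircle _ _ 0 t).trans (H.apply_zero t)
  · exact (loopFamily_apply_expCircle _ _ 1 t).trans (H.apply_one t)

end FreeLoopSpace

open FreeLoopSpace in
/-- if `X` is path-connected with trivial `π₂` at every point and finite
abelianized fundamental group, and `L` is a free loop whose class `[L]` is trivial,
then every homomorphism from `π₁(ΛX, L)` to a torsion-free abelian group is trivial. -/
theorem monoidHom_loopSpace_fundamentalGroup_eq_one_of_finite_abelianization
    {X : Type u} [TopologicalSpace X] [PathConnectedSpace X] (x₀ : X)
    (hπ₂ : ∀ x : X, Subsingleton (π_ 2 X x))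
    (hab : Finite (Abelianization (FundamentalGroup X x₀)))
    (L : FreeLoopSpace X) (hL : loopClass L = 1)
    {A : Type v} [CommGroup A] (hA : Monoid.IsTorsionFree A)
    (ψ : FundamentalGroup (FreeLoopSpace X) L →* A) :
    ψ = 1 := by
  have := hπ₂ (L 1)
  let e : FundamentalGroup (FreeLoopSpace X) L ≃* FundamentalGroup X x₀ :=
    (FundamentalGroup.fundamentalGroupMulEquivOfPath
      (joined_const_of_loopClass_eq_one hL).somePath).trans <|
    (fundamentalGroupConstMulEquiv (L 1)).trans <|
    FundamentalGroup.fundamentalGroupMulEquivOfPath (PathConnectedSpace.somePath (L 1) x₀)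
  have : Finite (Abelianization (FundamentalGroup (FreeLoopSpace X) L)) :=
    .of_equiv _ e.symm.abelianizationCongr.toEquiv
  exact ψ.eq_one_of_finite_abelianization hA
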